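/- Let H : [0,1] × [0,1] → ℝ, and consider the concatenation-rescaling map 𝒞(u,v,T)(t) = (T+1)·u(t(T+1)) for 0 ≤ t < 1/(T+1) and (T+1)·v((T+1)t − 1) for 1/(T+1) < t ≤ 1. Then 𝒞 : L²([0,1]) × L²([0,∞)) × [0,∞) → L²([0,1]) is jointly continuous, and ‖𝒞(u,v,T)‖²_{L²([0,1])} = (T+1)(‖u‖²_{L²([0,1])} + ‖v|_{[0,T]}‖²_{L²}). -/

import Mathlib

open Filter Topology MeasureTheory

/-- The concatenation–rescaling map `𝒞(u,v,T)` of two controls. -/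
noncomputable def concatRescale (u v : ℝ → ℝ) (T : ℝ) : ℝ → ℝ :=
  fun t => if t < 1 / (T + 1) then (T + 1) * u (t * (T + 1)) else (T + 1) * v ((T + 1) * t - 1)

/-!
On `[0, 1/(T+1)]` the function `𝒞(u,v,T)` is a rescaled copy of `u` on `[0,1]`, and on
`[1/(T+1), 1]` one of `v` on `[0,T]`; the norm identity is two affine changes of variables.
The identity also shows that `(u, v) ↦ 𝒞(u,v,S)` is linear and bounded by `√(S+1)`, uniformly
for `S` near `T`, so joint continuity reduces to continuity of `S ↦ 𝒞(u,v,S)` for fixed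
`(u, v)`. For continuous compactly supported `u, v` this is dominated convergence (the pointwise
limit exists off the break point `1/(T+1)`), and the general case follows by density of such
functions in `L²`.
-/

open Set

variable {u v g h : ℝ → ℝ} {T t : ℝ}

lemma MeasureTheory.MemLp.intervalIntegrable_sq {s : Set ℝ} {a b : ℝ}
    (hu : MemLp u 2 (volume.restrict s)) (hab : a ≤ b) (hs : Icc a b ⊆ s) :
    IntervalIntegrable (fun x => u x ^ 2) volume a b :=
  (intervalIntegrable_iff_integrableOn_Icc_of_le hab).2
    (IntegrableOn.mono_set ((memLp_two_iff_integrable_sq hu.1).1 hu) hs)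

lemma MeasureTheory.MemLp.exists_continuous_integral_sub_sq_le {s : Set ℝ}
    (hu : MemLp u 2 (volume.restrict s)) {δ : ℝ} (hδ : 0 < δ) :
    ∃ g, Continuous g ∧ HasCompactSupport g ∧ MemLp g 2 (volume.restrict s) ∧
      ∫ t in s, (u t - g t) ^ 2 ≤ δ := by
  obtain ⟨g, hgc, hug, hg, hgm⟩ :=
    MemLp.exists_hasCompactSupport_integral_rpow_sub_le two_pos
      (show MemLp u (ENNReal.ofReal 2) _ by simpa using hu) hδ
  refine ⟨g, hg, hgc, by simpa using hgm, ?_⟩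
  simpa [Real.norm_eq_abs] using hug

lemma integral_add_sq_le {α : Type*} [MeasurableSpace α] {μ : Measure α} {f g : α → ℝ}
    (hf : MemLp f 2 μ) (hg : MemLp g 2 μ) :
    ∫ x, (f x + g x) ^ 2 ∂μ ≤ 2 * ((∫ x, f x ^ 2 ∂μ) + ∫ x, g x ^ 2 ∂μ) := by
  have hf2 := (memLp_two_iff_integrable_sq hf.1).1 hf
  have hg2 := (memLp_two_iff_integrable_sq hg.1).1 hg
  rw [← integral_add hf2 hg2, ← integral_const_mul]
  exact integral_mono ((memLp_two_iff_integrable_sq (hf.add hg).1).1 (hf.add hg))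
    ((hf2.add hg2).const_mul 2) fun x => add_sq_le

lemma quasiMeasurePreserving_mul_const {c : ℝ} (hc : c ≠ 0) :
    Measure.QuasiMeasurePreserving (fun t : ℝ => t * c) volume volume := by
  simpa only [smul_eq_mul, mul_comm c] using
    Measure.quasiMeasurePreserving_smul (volume : Measure ℝ) hc

lemma quasiMeasurePreserving_const_mul_sub {c : ℝ} (hc : c ≠ 0) (d : ℝ) :
    Measure.QuasiMeasurePreserving (fun t : ℝ => c * t - d) volume volume :=
  (measurePreserving_sub_right (volume : Measure ℝ) d).quasiMeasurePreserving.comp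
    (Measure.quasiMeasurePreserving_smul (volume : Measure ℝ) hc)

lemma concatRescale_of_lt (ht : t < 1 / (T + 1)) :
    concatRescale u v T t = (T + 1) * u (t * (T + 1)) := if_pos ht

lemma concatRescale_of_le (ht : 1 / (T + 1) ≤ t) :
    concatRescale u v T t = (T + 1) * v ((T + 1) * t - 1) := if_neg ht.not_gt

lemma concatRescale_sub (u u' v v' : ℝ → ℝ) (T : ℝ) :
    concatRescale (u - u') (v - v') T = concatRescale u v T - concatRescale u' v' T := by
  ext t
  simp only [concatRescale, Pi.sub_apply]
  split <;> ring

lemma concatRescale_eqOn_left (hT : 0 < T + 1) :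
    EqOn (concatRescale u v T) (fun t => (T + 1) * u (t * (T + 1))) (uIoo 0 (1 / (T + 1))) :=
  fun _ ht => concatRescale_of_lt (by rw [uIoo_of_le (by positivity)] at ht; exact ht.2)

lemma concatRescale_eqOn_right (hT : 0 ≤ T) :
    EqOn (concatRescale u v T) (fun t => (T + 1) * v ((T + 1) * t - 1)) (uIoo (1 / (T + 1)) 1) :=
  fun _ ht => concatRescale_of_le <| by
    rw [uIoo_of_le ((div_le_one (by positivity)).2 (by linarith))] at ht; exact ht.1.le

lemma integral_concatRescale_sq_left (hT : 0 < T + 1) (u v : ℝ → ℝ) :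
    ∫ t in 0..1 / (T + 1), concatRescale u v T t ^ 2 = (T + 1) * ∫ t in 0..1, u t ^ 2 := by
  have hmul : 1 / (T + 1) * (T + 1) = 1 := by field_simp
  calc ∫ t in 0..1 / (T + 1), concatRescale u v T t ^ 2
      = ∫ t in 0..1 / (T + 1), (T + 1) ^ 2 * u (t * (T + 1)) ^ 2 :=
        intervalIntegral.integral_congr_uIoo fun t ht => by
          simp only [concatRescale_eqOn_left hT ht]; ring
    _ = (T + 1) * ∫ t in 0..1, u t ^ 2 := by
        rw [intervalIntegral.integral_const_mul,
          intervalIntegral.integral_comp_mul_right (fun x => u x ^ 2) hT.ne', zero_mul, hmul,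
          smul_eq_mul]
        field_simp

lemma integral_concatRescale_sq_right (hT : 0 ≤ T) (u v : ℝ → ℝ) :
    ∫ t in 1 / (T + 1)..1, concatRescale u v T t ^ 2 = (T + 1) * ∫ t in 0..T, v t ^ 2 := by
  have hT' : 0 < T + 1 := by linarith
  have hmul : (T + 1) * (1 / (T + 1)) - 1 = 0 := by field_simp; ring
  calc ∫ t in 1 / (T + 1)..1, concatRescale u v T t ^ 2
      = ∫ t in 1 / (T + 1)..1, (T + 1) ^ 2 * v ((T + 1) * t - 1) ^ 2 :=
        intervalIntegral.integral_congr_uIoo fun t ht => by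
          simp only [concatRescale_eqOn_right hT ht]; ring
    _ = (T + 1) * ∫ t in 0..T, v t ^ 2 := by
        rw [intervalIntegral.integral_const_mul,
          intervalIntegral.integral_comp_mul_sub (fun x => v x ^ 2) hT'.ne' 1, hmul, mul_one,
          add_sub_cancel_right, smul_eq_mul]
        field_simp

lemma intervalIntegrable_concatRescale_sq_left (hT : 0 < T + 1)
    (hu : IntervalIntegrable (fun t => u t ^ 2) volume 0 1) (v : ℝ → ℝ) :
    IntervalIntegrable (fun t => concatRescale u v T t ^ 2) volume 0 (1 / (T + 1)) := by
  have h := (hu.comp_mul_right (c := T + 1)).const_mul ((T + 1) ^ 2)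
  rw [zero_div] at h
  exact h.congr_uIoo fun t ht => by simp only [concatRescale_eqOn_left hT ht]; ring

lemma intervalIntegrable_concatRescale_sq_right (hT : 0 ≤ T) (u : ℝ → ℝ)
    (hv : IntervalIntegrable (fun t => v t ^ 2) volume 0 T) :
    IntervalIntegrable (fun t => concatRescale u v T t ^ 2) volume (1 / (T + 1)) 1 := by
  have hT' : 0 < T + 1 := by linarith
  have h := ((hv.comp_sub_right 1).comp_mul_left (c := T + 1)).const_mul ((T + 1) ^ 2)
  rw [zero_add, div_self hT'.ne'] at h
  exact h.congr_uIoo fun t ht => by simp only [concatRescale_eqOn_right hT ht]; ring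

lemma intervalIntegrable_concatRescale_sq (hT : 0 ≤ T)
    (hu : IntervalIntegrable (fun t => u t ^ 2) volume 0 1)
    (hv : IntervalIntegrable (fun t => v t ^ 2) volume 0 T) :
    IntervalIntegrable (fun t => concatRescale u v T t ^ 2) volume 0 1 :=
  (intervalIntegrable_concatRescale_sq_left (by linarith) hu v).trans
    (intervalIntegrable_concatRescale_sq_right hT u hv)

lemma integral_concatRescale_sq (hT : 0 ≤ T)
    (hu : IntervalIntegrable (fun t => u t ^ 2) volume 0 1)
    (hv : IntervalIntegrable (fun t => v t ^ 2) volume 0 T) :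
    ∫ t in 0..1, concatRescale u v T t ^ 2
      = (T + 1) * ((∫ t in 0..1, u t ^ 2) + ∫ t in 0..T, v t ^ 2) := by
  rw [← intervalIntegral.integral_add_adjacent_intervals
    (intervalIntegrable_concatRescale_sq_left (by linarith) hu v)
    (intervalIntegrable_concatRescale_sq_right hT u hv),
    integral_concatRescale_sq_left (by linarith), integral_concatRescale_sq_right hT, mul_add]

lemma aestronglyMeasurable_concatRescale (hT : 0 < T + 1)
    (hu : AEStronglyMeasurable u (volume.restrict (Icc 0 1)))
    (hv : AEStronglyMeasurable v (volume.restrict (Ici 0))) :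
    AEStronglyMeasurable (concatRescale u v T) (volume.restrict (Ioc 0 1)) := by
  have hpw : concatRescale u v T = (Iio (1 / (T + 1))).piecewise
      (fun t => (T + 1) * u (t * (T + 1))) (fun t => (T + 1) * v ((T + 1) * t - 1)) := by
    ext t; simp only [concatRescale, piecewise, mem_Iio]
  rw [hpw]
  refine AEStronglyMeasurable.piecewise measurableSet_Iio ?_ ?_ <;>
    rw [Measure.restrict_restrict (by measurability)] <;> refine AEStronglyMeasurable.const_mul ?_ _
  · refine hu.comp_quasiMeasurePreserving ((quasiMeasurePreserving_mul_const hT.ne').restrict ?_)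
    rintro t ⟨hts, ht0, -⟩
    rw [mem_Iio, lt_div_iff₀ hT] at hts
    exact ⟨by positivity, hts.le⟩
  · refine hv.comp_quasiMeasurePreserving
      ((quasiMeasurePreserving_const_mul_sub hT.ne' 1).restrict ?_)
    rintro t ⟨hts, -, -⟩
    rw [mem_compl_iff, mem_Iio, not_lt, div_le_iff₀ hT] at hts
    exact show 0 ≤ (T + 1) * t - 1 by linarith

lemma memLp_concatRescale (hT : 0 ≤ T) (hu : MemLp u 2 (volume.restrict (Icc 0 1)))
    (hv : MemLp v 2 (volume.restrict (Ici 0))) :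
    MemLp (concatRescale u v T) 2 (volume.restrict (Ioc 0 1)) :=
  (memLp_two_iff_integrable_sq (aestronglyMeasurable_concatRescale (by linarith) hu.1 hv.1)).2
    (intervalIntegrable_concatRescale_sq hT (hu.intervalIntegrable_sq zero_le_one subset_rfl)
      (hv.intervalIntegrable_sq hT Icc_subset_Ici_self)).1

lemma integral_concatRescale_sq_le (hT : 0 ≤ T) (hu : MemLp u 2 (volume.restrict (Icc 0 1)))
    (hv : MemLp v 2 (volume.restrict (Ici 0))) :
    ∫ t in 0..1, concatRescale u v T t ^ 2
      ≤ (T + 1) * ((∫ t in 0..1, u t ^ 2) + ∫ t in Ici 0, v t ^ 2) := by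
  rw [integral_concatRescale_sq hT (hu.intervalIntegrable_sq zero_le_one subset_rfl)
    (hv.intervalIntegrable_sq hT Icc_subset_Ici_self), intervalIntegral.integral_of_le hT]
  gcongr
  · exact ae_of_all _ fun t => sq_nonneg _
  · exact (memLp_two_iff_integrable_sq hv.1).1 hv
  · exact Ioc_subset_Icc_self.trans Icc_subset_Ici_self

lemma integral_concatRescale_sub_sq_le {u' v' : ℝ → ℝ} {S : ℝ} (hS : 0 ≤ S) (hT : 0 ≤ T)
    (hu : MemLp u 2 (volume.restrict (Icc 0 1))) (hv : MemLp v 2 (volume.restrict (Ici 0)))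
    (hu' : MemLp u' 2 (volume.restrict (Icc 0 1))) (hv' : MemLp v' 2 (volume.restrict (Ici 0))) :
    ∫ t in 0..1, (concatRescale u' v' S t - concatRescale u v T t) ^ 2
      ≤ 2 * ((S + 1) * ((∫ t in 0..1, (u' t - u t) ^ 2) + ∫ t in Ici 0, (v' t - v t) ^ 2)
        + ∫ t in 0..1, (concatRescale u v S t - concatRescale u v T t) ^ 2) := by
  have hP := memLp_concatRescale hS (hu'.sub hu) (hv'.sub hv)
  have hD := (memLp_concatRescale hS hu hv).sub (memLp_concatRescale hT hu hv)
  have h1 := integral_add_sq_le hP hD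
  have hPb := integral_concatRescale_sq_le hS (hu'.sub hu) (hv'.sub hv)
  simp only [concatRescale_sub, Pi.sub_apply] at h1 hPb
  simp only [intervalIntegral.integral_of_le zero_le_one] at hPb ⊢
  calc _ = ∫ t in Ioc 0 1, ((concatRescale u' v' S t - concatRescale u v S t)
        + (concatRescale u v S t - concatRescale u v T t)) ^ 2 := by congr 1; ext t; ring_nf
    _ ≤ _ := by linarith

lemma integral_concatRescale_sub_sq_le_of_approx {S : ℝ} (hS : 0 ≤ S) (hT : 0 ≤ T)
    (hu : MemLp u 2 (volume.restrict (Icc 0 1))) (hv : MemLp v 2 (volume.restrict (Ici 0)))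
    (hg : MemLp g 2 (volume.restrict (Icc 0 1))) (hh : MemLp h 2 (volume.restrict (Ici 0))) :
    ∫ t in 0..1, (concatRescale u v S t - concatRescale u v T t) ^ 2
      ≤ 2 * (∫ t in 0..1, (concatRescale g h S t - concatRescale g h T t) ^ 2)
        + 4 * (S + T + 2) *
          ((∫ t in 0..1, (u t - g t) ^ 2) + ∫ t in Ici 0, (v t - h t) ^ 2) := by
  have hE := (memLp_concatRescale hS hg hh).sub (memLp_concatRescale hT hg hh)
  have hP := memLp_concatRescale hS (hu.sub hg) (hv.sub hh)
  have hQ := (memLp_concatRescale hT (hu.sub hg) (hv.sub hh)).neg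
  have h1 := integral_add_sq_le hE (hP.add hQ)
  have h2 := integral_add_sq_le hP hQ
  have hPb := integral_concatRescale_sq_le hS (hu.sub hg) (hv.sub hh)
  have hQb := integral_concatRescale_sq_le hT (hu.sub hg) (hv.sub hh)
  simp only [concatRescale_sub, Pi.add_apply, Pi.sub_apply, Pi.neg_apply, neg_sq] at h1 h2 hPb hQb
  simp only [intervalIntegral.integral_of_le zero_le_one] at hPb hQb ⊢
  calc _ = ∫ t in Ioc 0 1, ((concatRescale g h S t - concatRescale g h T t)
        + ((concatRescale u v S t - concatRescale g h S t)
          + -(concatRescale u v T t - concatRescale g h T t))) ^ 2 := by congr 1; ext t; ring_nf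
    _ ≤ _ := by linarith

lemma abs_concatRescale_le {M : ℝ} (hg : ∀ x, |g x| ≤ M) (hh : ∀ x, |h x| ≤ M)
    (S t : ℝ) : |concatRescale g h S t| ≤ |S + 1| * M := by
  unfold concatRescale
  split <;> rw [abs_mul] <;> exact mul_le_mul_of_nonneg_left (by apply_assumption) (abs_nonneg _)

lemma Continuous.measurable_concatRescale (hg : Continuous g) (hh : Continuous h) (S : ℝ) :
    Measurable (concatRescale g h S) :=
  Measurable.ite measurableSet_Iio (by fun_prop) (by fun_prop)

lemma Continuous.continuousAt_concatRescale (hg : Continuous g) (hh : Continuous h)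
    (hT : T + 1 ≠ 0) (ht : t ≠ 1 / (T + 1)) :
    ContinuousAt (fun S => concatRescale g h S t) T := by
  have hs : ContinuousAt (fun S : ℝ => 1 / (S + 1)) T := by fun_prop (disch := exact hT)
  rcases ht.lt_or_gt with ht | ht
  · refine (show ContinuousAt (fun S => (S + 1) * g (t * (S + 1))) T by fun_prop).congr ?_
    filter_upwards [continuousAt_const.eventually_lt hs ht] with S hS
    exact (concatRescale_of_lt hS).symm
  · refine (show ContinuousAt (fun S => (S + 1) * h ((S + 1) * t - 1)) T by fun_prop).congr ?_
    filter_upwards [hs.eventually_lt continuousAt_const ht] with S hS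
    exact (concatRescale_of_le hS.le).symm

lemma tendsto_integral_concatRescale_sub_sq_of_continuous (hg : Continuous g)
    (hgc : HasCompactSupport g) (hh : Continuous h) (hhc : HasCompactSupport h) (hT : T + 1 ≠ 0) :
    Tendsto (fun S => ∫ t in 0..1, (concatRescale g h S t - concatRescale g h T t) ^ 2)
      (𝓝 T) (𝓝 0) := by
  obtain ⟨Mg, hMg⟩ := hgc.exists_bound_of_continuous hg
  obtain ⟨Mh, hMh⟩ := hhc.exists_bound_of_continuous hh
  set M := max Mg Mh
  have hgM : ∀ x, |g x| ≤ M := fun x => (hMg x).trans (le_max_left _ _)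
  have hhM : ∀ x, |h x| ≤ M := fun x => (hMh x).trans (le_max_right _ _)
  have hM : 0 ≤ M := (abs_nonneg _).trans (hgM 0)
  have hnear : ∀ᶠ S in 𝓝 T, |S + 1| ≤ |T + 1| + 1 :=
    (show ContinuousAt (fun S : ℝ => |S + 1|) T by fun_prop).eventually
      (eventually_le_nhds (lt_add_one _))
  simpa using intervalIntegral.tendsto_integral_filter_of_dominated_convergence (a := 0) (b := 1)
    (F := fun S t => (concatRescale g h S t - concatRescale g h T t) ^ 2) (f := fun _ => 0)
    (fun _ => (2 * (|T + 1| + 1) * M) ^ 2)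
    (Eventually.of_forall fun S => (((hg.measurable_concatRescale hh S).sub
      (hg.measurable_concatRescale hh T)).pow_const 2).aestronglyMeasurable)
    (hnear.mono fun S hS => ae_of_all _ fun t _ => by
      have h1 := abs_concatRescale_le hgM hhM S t
      have h2 := abs_concatRescale_le hgM hhM T t
      rw [Real.norm_eq_abs, abs_pow]
      refine pow_le_pow_left₀ (abs_nonneg _) ?_ 2
      calc _ ≤ |concatRescale g h S t| + |concatRescale g h T t| := abs_sub _ _
        _ ≤ 2 * (|T + 1| + 1) * M := by nlinarith [abs_nonneg (T + 1)])
    intervalIntegrable_const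
    (by
      filter_upwards [Measure.ae_ne volume (1 / (T + 1))] with t ht _
      simpa using (((hg.continuousAt_concatRescale hh hT ht).tendsto).sub_const
        (concatRescale g h T t)).pow 2)

lemma tendsto_integral_concatRescale_sub_sq (hT : 0 ≤ T)
    (hu : MemLp u 2 (volume.restrict (Icc 0 1))) (hv : MemLp v 2 (volume.restrict (Ici 0))) :
    Tendsto (fun S => ∫ t in 0..1, (concatRescale u v S t - concatRescale u v T t) ^ 2)
      (𝓝[Ici 0] T) (𝓝 0) := by
  refine tendsto_order.2 ⟨fun a ha => Eventually.of_forall fun S => ha.trans_le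
    (intervalIntegral.integral_nonneg zero_le_one fun t _ => sq_nonneg _), fun ε hε => ?_⟩
  -- Makes the error term of `integral_concatRescale_sub_sq_le_of_approx` at most `ε / 2`
  -- once `S ≤ T + 1`.
  obtain ⟨δ, hδ, hδε⟩ : ∃ δ > 0, 8 * (2 * T + 3) * δ = ε / 2 :=
    ⟨ε / (16 * (2 * T + 3)), by positivity, by field_simp; ring⟩
  obtain ⟨g, hg, hgc, hgm, hug⟩ := hu.exists_continuous_integral_sub_sq_le hδ
  obtain ⟨h, hh, hhc, hhm, hvh⟩ := hv.exists_continuous_integral_sub_sq_le hδ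
  rw [integral_Icc_eq_integral_Ioc, ← intervalIntegral.integral_of_le zero_le_one] at hug
  have hE := tendsto_integral_concatRescale_sub_sq_of_continuous hg hgc hh hhc
    (by positivity : T + 1 ≠ 0)
  filter_upwards [self_mem_nhdsWithin, nhdsWithin_le_nhds
    ((eventually_le_nhds (lt_add_one T)).and
      (hE.eventually (gt_mem_nhds (by positivity : 0 < ε / 4))))]
    with S (hS : 0 ≤ S) ⟨hST, hES⟩
  have hbound := integral_concatRescale_sub_sq_le_of_approx hS hT hu hv hgm hhm
  have hη : (S + T + 2) * ((∫ t in 0..1, (u t - g t) ^ 2) + ∫ t in Ici 0, (v t - h t) ^ 2)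
      ≤ (2 * T + 3) * (2 * δ) :=
    mul_le_mul (by linarith) (by linarith) (add_nonneg
      (intervalIntegral.integral_nonneg zero_le_one fun t _ => sq_nonneg _)
      (integral_nonneg fun t => sq_nonneg _)) (by linarith)
  linarith

/-- The concatenation–rescaling map
`𝒞 : L²([0,1]) × L²([0,∞)) × [0,∞) → L²([0,1])` satisfies the norm identity
`‖𝒞(u,v,T)‖² = (T+1)(‖u‖² + ‖v|_{[0,T]}‖²)` and is jointly (sequentially) continuous. -/
theorem concatRescale_norm_and_continuous
    (u v : ℝ → ℝ) (T : ℝ) (hT : 0 ≤ T)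
    (hu : MemLp u 2 (volume.restrict (Set.Icc (0:ℝ) 1)))
    (hv : MemLp v 2 (volume.restrict (Set.Ici (0:ℝ)))) :
    ((∫ t in (0:ℝ)..1, (concatRescale u v T t) ^ 2) =
      (T + 1) * ((∫ t in (0:ℝ)..1, (u t) ^ 2) + ∫ t in (0:ℝ)..T, (v t) ^ 2)) ∧
    ∀ (uN vN : ℕ → ℝ → ℝ) (TN : ℕ → ℝ),
      (∀ m, 0 ≤ TN m) →
      (∀ m, MemLp (uN m) 2 (volume.restrict (Set.Icc (0:ℝ) 1))) →
      (∀ m, MemLp (vN m) 2 (volume.restrict (Set.Ici (0:ℝ)))) →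
      Tendsto (fun m => ∫ t in (0:ℝ)..1, (uN m t - u t) ^ 2) atTop (𝓝 0) →
      Tendsto (fun m => ∫ t in Set.Ici (0:ℝ), (vN m t - v t) ^ 2) atTop (𝓝 0) →
      Tendsto TN atTop (𝓝 T) →
      Tendsto (fun m => ∫ t in (0:ℝ)..1,
        (concatRescale (uN m) (vN m) (TN m) t - concatRescale u v T t) ^ 2) atTop (𝓝 0) := by
  refine ⟨integral_concatRescale_sq hT (hu.intervalIntegrable_sq zero_le_one subset_rfl)
    (hv.intervalIntegrable_sq hT Icc_subset_Ici_self), ?_⟩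
  intro uN vN TN hTN huN hvN hu_lim hv_lim hT_lim
  have hT_lim' : Tendsto TN atTop (𝓝[Ici 0] T) :=
    tendsto_nhdsWithin_iff.2 ⟨hT_lim, Eventually.of_forall hTN⟩
  have hbound_lim := (((hT_lim.add_const 1).mul (hu_lim.add hv_lim)).add
    ((tendsto_integral_concatRescale_sub_sq hT hu hv).comp hT_lim')).const_mul 2
  simp only [add_zero, mul_zero] at hbound_lim
  exact squeeze_zero (fun m => intervalIntegral.integral_nonneg zero_le_one fun t _ => sq_nonneg _)
    (fun m => integral_concatRescale_sub_sq_le (hTN m) hT hu hv (huN m) (hvN m)) hbound_lim
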